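/- Let G be a connected simple graph on n ≥ 2 vertices and let γ^(k) = sqrt( (Σ_i d_{k+1}(i)²) / (Σ_i d_k(i)²) ) where d_k(i) is the number of walks of length k starting at vertex i. Then for every k ≥ 0, EE(G) > e^{γ^(k)} + n − 1 − γ^(k). -/

import Mathlib

/-!
Since `tr A = 0`, `EE(G) = n + ∑ᵢ f(λᵢ)` with `f t = eᵗ - 1 - t ≥ 0`, and `f t > 0` for `t ≠ 0`.
As `A` has nonnegative entries, its largest eigenvalue `λ₁` bounds every `|λᵢ|`, hence
`‖A x‖ ≤ λ₁ ‖x‖`; for `x = A^k 𝟙` this gives `γ^(k) ≤ λ₁`, so `f(γ^(k)) ≤ f(λ₁)` because `f` is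
increasing on `[0, ∞)`. An edge makes `A ≠ 0`, so some eigenvalue `λⱼ` is negative, and its
term `f(λⱼ) > 0` makes the inequality strict.
-/

/-- The adjacency matrix of a simple graph over `ℝ` is Hermitian. -/
theorem adjHerm {n : ℕ} (G : SimpleGraph (Fin n)) [DecidableRel G.Adj] :
    (G.adjMatrix ℝ).IsHermitian := by
  rw [Matrix.IsHermitian, Matrix.conjTranspose_eq_transpose_of_trivial]
  exact G.isSymm_adjMatrix

/-- The (real) eigenvalues of the adjacency matrix of `G`. -/
noncomputable def graphEigs {n : ℕ} (G : SimpleGraph (Fin n)) [DecidableRel G.Adj] :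
    Fin n → ℝ := (adjHerm G).eigenvalues

/-- The Estrada index `EE(G) = ∑ i, exp (λ i)`. -/
noncomputable def estradaIndex {n : ℕ} (G : SimpleGraph (Fin n)) [DecidableRel G.Adj] : ℝ :=
  ∑ i, Real.exp (graphEigs G i)

/-- `dwalk G k i` is the number of walks of length `k` starting at `i`,
computed as `(A^k 𝟙)_i`. -/
noncomputable def dwalk {n : ℕ} (G : SimpleGraph (Fin n)) [DecidableRel G.Adj]
    (k : ℕ) (i : Fin n) : ℝ :=
  ((G.adjMatrix ℝ) ^ k).mulVec (fun _ => 1) i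

/-- The sequence `γ^(k) = sqrt((∑ i, d_{k+1}(i)²)/(∑ i, d_k(i)²))`. -/
noncomputable def gammaSeq {n : ℕ} (G : SimpleGraph (Fin n)) [DecidableRel G.Adj]
    (k : ℕ) : ℝ :=
  Real.sqrt ((∑ i, dwalk G (k + 1) i ^ 2) / (∑ i, dwalk G k i ^ 2))

open Matrix Finset WithLp Real

namespace OrthonormalBasis
variable {ι κ : Type*} [Fintype ι] [Fintype κ]

lemma dotProduct_eq_sum_repr_mul_repr (b : OrthonormalBasis κ ℝ (EuclideanSpace ℝ ι))
    (x y : ι → ℝ) :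
    x ⬝ᵥ y = ∑ i, b.repr (toLp 2 x) i * b.repr (toLp 2 y) i := by
  have h := b.repr.inner_map_map (toLp 2 x) (toLp 2 y)
  simp only [EuclideanSpace.inner_eq_star_dotProduct, star_trivial] at h
  rw [dotProduct_comm, ← h]
  simp [dotProduct, mul_comm]

end OrthonormalBasis

namespace Matrix
variable {ι : Type*} [Fintype ι]

lemma abs_mulVec_le {A : Matrix ι ι ℝ} (hA : ∀ p q, 0 ≤ A p q) (y : ι → ℝ) (p : ι) :
    |(A *ᵥ y) p| ≤ (A *ᵥ |y|) p := by
  simp only [mulVec, dotProduct, Pi.abs_apply]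
  refine (abs_sum_le_sum_abs _ _).trans_eq (sum_congr rfl fun q _ => ?_)
  rw [abs_mul, abs_of_nonneg (hA p q)]

lemma abs_dotProduct_mulVec_le {A : Matrix ι ι ℝ} (hA : ∀ p q, 0 ≤ A p q) (x y : ι → ℝ) :
    |x ⬝ᵥ (A *ᵥ y)| ≤ |x| ⬝ᵥ (A *ᵥ |y|) := by
  refine (abs_sum_le_sum_abs _ _).trans (sum_le_sum fun p _ => ?_)
  rw [abs_mul, Pi.abs_apply]
  exact mul_le_mul_of_nonneg_left (abs_mulVec_le hA y p) (abs_nonneg _)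

end Matrix

namespace Matrix.IsHermitian
variable {ι : Type*} [Fintype ι] [DecidableEq ι] {A : Matrix ι ι ℝ} (hA : A.IsHermitian)

lemma eigenvectorBasis_repr_toLp (x : ι → ℝ) (i : ι) :
    hA.eigenvectorBasis.repr (toLp 2 x) i = ⇑(hA.eigenvectorBasis i) ⬝ᵥ x := by
  rw [OrthonormalBasis.repr_apply_apply, EuclideanSpace.inner_eq_star_dotProduct]
  simp [dotProduct_comm]

lemma eigenvectorBasis_repr_mulVec (x : ι → ℝ) (i : ι) :
    hA.eigenvectorBasis.repr (toLp 2 (A *ᵥ x)) i =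
      hA.eigenvalues i * hA.eigenvectorBasis.repr (toLp 2 x) i := by
  have hT : Aᵀ = A := isHermitian_iff_isSymm.mp hA
  rw [eigenvectorBasis_repr_toLp, eigenvectorBasis_repr_toLp, dotProduct_mulVec,
    ← mulVec_transpose, hT, mulVec_eigenvectorBasis, smul_dotProduct, smul_eq_mul]

lemma dotProduct_mulVec_le {ρ : ℝ} (hρ : ∀ i, hA.eigenvalues i ≤ ρ) (x : ι → ℝ) :
    x ⬝ᵥ (A *ᵥ x) ≤ ρ * (x ⬝ᵥ x) := by
  simp only [hA.eigenvectorBasis.dotProduct_eq_sum_repr_mul_repr x, eigenvectorBasis_repr_mulVec,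
    mul_sum]
  refine sum_le_sum fun i _ => ?_
  nlinarith [hρ i, mul_self_nonneg (hA.eigenvectorBasis.repr (toLp 2 x) i)]

lemma mulVec_dotProduct_mulVec_le {r : ℝ} (hr : ∀ i, |hA.eigenvalues i| ≤ r) (x : ι → ℝ) :
    (A *ᵥ x) ⬝ᵥ (A *ᵥ x) ≤ r ^ 2 * (x ⬝ᵥ x) := by
  simp only [hA.eigenvectorBasis.dotProduct_eq_sum_repr_mul_repr, eigenvectorBasis_repr_mulVec,
    mul_sum]
  refine sum_le_sum fun i _ => ?_
  have : hA.eigenvalues i ^ 2 ≤ r ^ 2 := sq_le_sq.mpr ((hr i).trans (le_abs_self r))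
  nlinarith [mul_self_nonneg (hA.eigenvectorBasis.repr (toLp 2 x) i)]

lemma dotProduct_self_eigenvectorBasis (i : ι) :
    ⇑(hA.eigenvectorBasis i) ⬝ᵥ ⇑(hA.eigenvectorBasis i) = 1 := by
  rw [← eigenvectorBasis_repr_toLp, toLp_ofLp, OrthonormalBasis.repr_self]
  simp

/-- The Perron–Frobenius bound: `|λᵢ| = |vᵀ A v| ≤ |v|ᵀ A |v| ≤ ρ` for a unit eigenvector `v`. -/
lemma abs_eigenvalues_le {ρ : ℝ} (hA₀ : ∀ p q, 0 ≤ A p q) (hρ : ∀ i, hA.eigenvalues i ≤ ρ)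
    (i : ι) : |hA.eigenvalues i| ≤ ρ := by
  set v := ⇑(hA.eigenvectorBasis i)
  have hv : v ⬝ᵥ v = 1 := hA.dotProduct_self_eigenvectorBasis i
  have habs : |v| ⬝ᵥ |v| = v ⬝ᵥ v := sum_congr rfl fun p _ => abs_mul_abs_self (v p)
  calc |hA.eigenvalues i| = |v ⬝ᵥ (A *ᵥ v)| := by
        rw [mulVec_eigenvectorBasis, dotProduct_smul, hv, smul_eq_mul, mul_one]
    _ ≤ |v| ⬝ᵥ (A *ᵥ |v|) := abs_dotProduct_mulVec_le hA₀ v v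
    _ ≤ ρ * (|v| ⬝ᵥ |v|) := hA.dotProduct_mulVec_le hρ |v|
    _ = ρ := by rw [habs, hv, mul_one]

end Matrix.IsHermitian

lemma Real.exp_sub_self_monotoneOn : MonotoneOn (fun x => exp x - x) (Set.Ici 0) := by
  intro a ha b _ hab
  have hexp : exp b = exp a * exp (b - a) := by rw [← exp_add, add_sub_cancel]
  nlinarith [add_one_le_exp (b - a), one_le_exp (Set.mem_Ici.mp ha)]

lemma Fintype.exists_neg_of_sum_eq_zero {ι : Type*} [Fintype ι] {μ : ι → ℝ} (hsum : ∑ k, μ k = 0)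
    (hμ : μ ≠ 0) : ∃ j, μ j < 0 := by
  by_contra! h
  exact hμ ((Fintype.sum_eq_zero_iff_of_nonneg h).mp hsum)

lemma exp_add_card_sub_one_sub_lt_sum_exp {ι : Type*} [Fintype ι] {μ : ι → ℝ}
    (hsum : ∑ k, μ k = 0) {i j : ι} (hj : μ j < 0) {γ : ℝ} (hγ : 0 ≤ γ) (hγi : γ ≤ μ i) :
    exp γ + Fintype.card ι - 1 - γ < ∑ k, exp (μ k) := by
  set f : ι → ℝ := fun k => exp (μ k) - 1 - μ k
  have hf : ∀ k, 0 ≤ f k := fun k => by linarith [add_one_le_exp (μ k)]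
  have hfj : 0 < f j := by linarith [add_one_lt_exp hj.ne]
  have hij : i ≠ j := by rintro rfl; linarith
  have hsum_exp : ∑ k, exp (μ k) = Fintype.card ι + ∑ k, f k := by
    simp [f, sum_sub_distrib, hsum]
  calc exp γ + Fintype.card ι - 1 - γ ≤ Fintype.card ι + f i := by
        linarith [exp_sub_self_monotoneOn hγ (hγ.trans hγi) hγi]
    _ < Fintype.card ι + (f i + f j) := by linarith
    _ ≤ Fintype.card ι + ∑ k, f k := by
        gcongr
        exact add_le_sum (fun k _ => hf k) (mem_univ i) (mem_univ j) hij
    _ = ∑ k, exp (μ k) := hsum_exp.symm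

lemma SimpleGraph.adjMatrix_nonneg {V α : Type*} (G : SimpleGraph V) [DecidableRel G.Adj]
    [Zero α] [One α] [Preorder α] [ZeroLEOneClass α] (p q : V) : 0 ≤ G.adjMatrix α p q := by
  rw [adjMatrix_apply]
  split_ifs
  exacts [zero_le_one, le_rfl]

section Graph

variable {n : ℕ} (G : SimpleGraph (Fin n)) [DecidableRel G.Adj]

lemma sum_graphEigs_eq_zero : ∑ i, graphEigs G i = 0 := by
  simpa [graphEigs] using (adjHerm G).trace_eq_sum_eigenvalues.symm.trans (G.trace_adjMatrix ℝ)

lemma graphEigs_ne_zero {u v : Fin n} (huv : G.Adj u v) : graphEigs G ≠ 0 := by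
  rw [graphEigs, Ne, (adjHerm G).eigenvalues_eq_zero_iff]
  intro h
  simpa [huv] using congrFun₂ h u v

lemma dwalk_succ (k : ℕ) : dwalk G (k + 1) = G.adjMatrix ℝ *ᵥ dwalk G k := by
  ext i
  simp only [dwalk, pow_succ', ← mulVec_mulVec]
  rfl

lemma gammaSeq_le {r : ℝ} (hr₀ : 0 ≤ r) (hr : ∀ i, |graphEigs G i| ≤ r) (k : ℕ) :
    gammaSeq G k ≤ r := by
  have h := (adjHerm G).mulVec_dotProduct_mulVec_le hr (dwalk G k)
  rw [← dwalk_succ] at h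
  simp only [dotProduct, ← sq] at h
  rw [gammaSeq, Real.sqrt_le_left hr₀]
  exact div_le_of_le_mul₀ (sum_nonneg fun i _ => sq_nonneg _) (sq_nonneg r) h

end Graph

/-- For a connected simple graph on `n ≥ 2` vertices,
`EE(G) > e^{γ^(k)} + n − 1 − γ^(k)` for every `k ≥ 0`. -/
theorem estrada_gt_exp_gammaSeq {n : ℕ} (hn : 2 ≤ n)
    (G : SimpleGraph (Fin n)) [DecidableRel G.Adj] (hconn : G.Connected) :
    ∀ k : ℕ, estradaIndex G > Real.exp (gammaSeq G k) + (n : ℝ) - 1 - gammaSeq G k := by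
  intro k
  have : Nontrivial (Fin n) := Fin.nontrivial_iff_two_le.mpr hn
  obtain ⟨v, huv⟩ := hconn.preconnected.exists_adj_of_nontrivial ⟨0, by omega⟩
  obtain ⟨i, hi⟩ := Finite.exists_max (graphEigs G)
  have habs : ∀ j, |graphEigs G j| ≤ graphEigs G i :=
    (adjHerm G).abs_eigenvalues_le G.adjMatrix_nonneg hi
  obtain ⟨j, hj⟩ := Fintype.exists_neg_of_sum_eq_zero (sum_graphEigs_eq_zero G)
    (graphEigs_ne_zero G huv)
  have hγ := gammaSeq_le G ((abs_nonneg _).trans (habs i)) habs k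
  have key := exp_add_card_sub_one_sub_lt_sum_exp (sum_graphEigs_eq_zero G) hj
    (γ := gammaSeq G k) (Real.sqrt_nonneg _) hγ
  rwa [Fintype.card_fin] at key
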